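/- arXiv:1502.01384 — 8 statements merged into one kernel-verified Lean document; each statement's English description precedes it below -/
import Mathlib

section
/- For integers n ≥ 2 and 1 ≤ m ≤ n/2, the scaling ratio P(n,m) = sin(π/n) / (2·cos((m-1)π/n)·sin(mπ/n)) satisfies 0 < P(n,m) < 1. -/
open Real

/-- Contraction ratio of the Sierpinski n-gon built from a {n/m} star-polygon. -/
noncomputable def P (n m : ℕ) : ℝ :=
  Real.sin (π / n) / (2 * Real.cos (((m : ℝ) - 1) * π / n) * Real.sin ((m : ℝ) * π / n))

theorem P_pos_lt_one (n m : ℕ) (hn : 2 ≤ n) (hm1 : 1 ≤ m) (hm2 : (m : ℝ) ≤ (n : ℝ) / 2) :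
    0 < P n m ∧ P n m < 1 := by
  have hn0 : (0:ℝ) < n := by positivity
  have hm1' : (1:ℝ) ≤ (m:ℝ) := by exact_mod_cast hm1
  have hpi := Real.pi_pos
  -- denominator equals sin((2m-1)π/n) + sin(π/n)
  have key : 2 * Real.cos (((m : ℝ) - 1) * π / n) * Real.sin ((m : ℝ) * π / n)
      = Real.sin ((2 * (m:ℝ) - 1) * π / n) + Real.sin (π / n) := by
    have h1 : (2 * (m:ℝ) - 1) * π / n = (m:ℝ) * π / n + ((m:ℝ) - 1) * π / n := by ring
    have h2 : π / n = (m:ℝ) * π / n - ((m:ℝ) - 1) * π / n := by ring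
    rw [h1, h2, Real.sin_add, Real.sin_sub]
    ring
  have hs : 0 < Real.sin (π / n) := by
    apply Real.sin_pos_of_pos_of_lt_pi (by positivity)
    rw [div_lt_iff₀ hn0]
    nlinarith
  have ht : 0 < Real.sin ((2 * (m:ℝ) - 1) * π / n) := by
    apply Real.sin_pos_of_pos_of_lt_pi
    · apply div_pos _ hn0
      nlinarith
    · rw [div_lt_iff₀ hn0]
      nlinarith
  constructor
  · rw [P, key]
    positivity
  · rw [P, key, div_lt_one (by linarith)]
    linarith
end

section
/- For any natural number v ≥ 1, P(4v, v) = P(4v, v+1), where P(n,m) = sin(π/n) / (2·cos((m-1)π/n)·sin(mπ/n)). In fact both equal sin(π/(4v)) / (cos(π/(4v)) + sin(π/(4v))). -/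
open Real

theorem P_four_v (v : ℕ) (hv : 1 ≤ v) :
    P (4 * v) v = P (4 * v) (v + 1) ∧
    P (4 * v) v = Real.sin (π / (4 * v)) / (Real.cos (π / (4 * v)) + Real.sin (π / (4 * v))) := by
  have hv0 : (v : ℝ) ≠ 0 := Nat.cast_ne_zero.mpr (by omega)
  have h1 : (v : ℝ) * π / (4 * v) = π / 4 := by field_simp
  have h2 : ((v : ℝ) - 1) * π / (4 * v) = π / 4 - π / (4 * v) := by field_simp
  have h3 : ((v : ℝ) + 1) * π / (4 * v) = π / 4 + π / (4 * v) := by field_simp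
  have hs2 : Real.sqrt 2 * Real.sqrt 2 = 2 := Real.mul_self_sqrt (by norm_num)
  set x := π / (4 * (v : ℝ)) with hx
  have hd1 : 2 * Real.cos (π / 4 - x) * Real.sin (π / 4) = Real.cos x + Real.sin x := by
    rw [Real.cos_sub, Real.sin_pi_div_four, Real.cos_pi_div_four]
    linear_combination ((Real.cos x + Real.sin x) / 2) * hs2
  have hd2 : 2 * Real.cos (π / 4) * Real.sin (π / 4 + x) = Real.cos x + Real.sin x := by
    rw [Real.sin_add, Real.sin_pi_div_four, Real.cos_pi_div_four]
    linear_combination ((Real.cos x + Real.sin x) / 2) * hs2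
  have key : ∀ m : ℕ, P (4 * v) m =
      Real.sin (π / (4 * v)) /
        (2 * Real.cos (((m : ℝ) - 1) * π / (4 * v)) * Real.sin ((m : ℝ) * π / (4 * v))) := by
    intro m; simp [P]
  constructor
  · rw [key v, key (v + 1)]
    push_cast
    rw [show ((v : ℝ) + 1 - 1) * π / (4 * v) = (v : ℝ) * π / (4 * v) by ring, h1, h2, h3]
    rw [hd1, hd2]
  · rw [key v]
    push_cast
    rw [h1, h2, hd1]
end

section
/- The limit as n → ∞ of n·P(n, m(n)) equals π, where m(n) is any sequence of integers with n/4 ≤ m(n) ≤ n/4 + 1 and P(n,m) = sin(π/n) / (2·cos((m-1)π/n)·sin(mπ/n)). -/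
/-!
Both angles (m - 1)π/n and mπ/n lie within π/n of π/4, so the denominator of P(n, m(n)) tends to
2 cos(π/4) sin(π/4) = sin(π/2) = 1, while n sin(π/n) → π.
-/

open Real

open Filter Topology

theorem tendsto_natCast_mul_sin_div_natCast (c : ℝ) :
    Tendsto (fun n : ℕ => (n : ℝ) * sin (c / n)) atTop (𝓝 c) := by
  have hsinc : Tendsto (fun n : ℕ => c * sinc (c / n)) atTop (𝓝 c) := by
    simpa [sinc_zero] using
      ((continuous_sinc.tendsto 0).comp (tendsto_const_div_atTop_nhds_zero_nat c)).const_mul c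
  refine hsinc.congr' ?_
  filter_upwards [eventually_ne_atTop 0] with n hn
  by_cases hc : c = 0
  · simp [hc]
  · rw [sinc_of_ne_zero (by positivity)]
    field_simp

theorem tendsto_div_natCast_of_le_of_le_add {f : ℕ → ℝ} {r C : ℝ}
    (hle : ∀ n, n * r ≤ f n) (hge : ∀ n, f n ≤ n * r + C) :
    Tendsto (fun n : ℕ => f n / n) atTop (𝓝 r) := by
  have hupper : Tendsto (fun n : ℕ => r + C / n) atTop (𝓝 r) := by
    simpa using (tendsto_const_div_atTop_nhds_zero_nat C).const_add r
  refine tendsto_of_tendsto_of_tendsto_of_le_of_le' tendsto_const_nhds hupper ?_ ?_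
  all_goals
    filter_upwards [eventually_gt_atTop 0] with n hn
    have hn : (0 : ℝ) < n := by exact_mod_cast hn
  · rw [le_div_iff₀ hn]; linarith [hle n]
  · rw [div_le_iff₀ hn, add_mul, div_mul_cancel₀ _ hn.ne']; linarith [hge n]

theorem tendsto_two_mul_cos_mul_sin_pi_div_four {α : Type*} {l : Filter α}
    {x y : α → ℝ} (hx : Tendsto x l (𝓝 (π / 4))) (hy : Tendsto y l (𝓝 (π / 4))) :
    Tendsto (fun a => 2 * cos (x a) * sin (y a)) l (𝓝 1) := by
  have hvalue : 2 * cos (π / 4) * sin (π / 4) = 1 := by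
    rw [mul_assoc, mul_comm (cos _), ← mul_assoc, ← sin_two_mul, ← sin_pi_div_two]
    ring_nf
  rw [← hvalue]
  exact (((continuous_cos.tendsto _).comp hx).const_mul 2).mul ((continuous_sin.tendsto _).comp hy)

theorem nP_tendsto_pi (m : ℕ → ℕ)
    (hm : ∀ n : ℕ, (n : ℝ) / 4 ≤ (m n : ℝ) ∧ (m n : ℝ) ≤ (n : ℝ) / 4 + 1) :
    Filter.Tendsto (fun n : ℕ => (n : ℝ) * P n (m n)) Filter.atTop (nhds π) := by
  have hangle : Tendsto (fun n : ℕ => (m n : ℝ) * π / n) atTop (𝓝 (π / 4)) :=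
    tendsto_div_natCast_of_le_of_le_add (C := π) (fun n => by nlinarith [(hm n).1, pi_pos])
      (fun n => by nlinarith [(hm n).2, pi_pos])
  have hangle' : Tendsto (fun n : ℕ => ((m n : ℝ) - 1) * π / n) atTop (𝓝 (π / 4)) := by
    simpa only [sub_mul, one_mul, sub_div, sub_zero] using
      hangle.sub (tendsto_const_div_atTop_nhds_zero_nat π)
  have hquotient := (tendsto_natCast_mul_sin_div_natCast π).div
    (tendsto_two_mul_cos_mul_sin_pi_div_four hangle' hangle) one_ne_zero
  rw [div_one] at hquotient
  exact hquotient.congr fun n => by simp only [P, Pi.div_apply, mul_div_assoc]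
end

section
/- Let m(n) be integers with n/4 ≤ m(n) ≤ n/4+1 and let s(n) = -ln(n)/ln(P(n,m(n))), where P(n,m) = sin(π/n)/(2·cos((m-1)π/n)·sin(mπ/n)). Then s(n) → 1 as n → ∞. -/
/-!
As `n → ∞` the ratio `m(n)/n` tends to `1/4`, so both angles `(m - 1)π/n` and `mπ/n` tend to `π/4`
and the denominator `2 cos · sin` of `P n (m n)` tends to `2 · (√2/2)² = 1`; since
`n sin(π/n) → π`, this gives `n · P n (m n) → π`. Hence `log P = -log n + O(1)`, and
`-log n / log P → 1`.
-/

open Real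

open Filter Topology

theorem tendsto_neg_log_div_log_of_tendsto_mul {α : Type*} {l : Filter α} {x r : α → ℝ} {c : ℝ}
    (hx : Tendsto x l atTop) (hc : 0 < c) (hxr : Tendsto (fun a => x a * r a) l (𝓝 c)) :
    Tendsto (fun a => -log (x a) / log (r a)) l (𝓝 1) := by
  have hratio : Tendsto (fun a => log (x a * r a) / log (x a)) l (𝓝 0) :=
    ((continuousAt_log hc.ne').tendsto.comp hxr).div_atTop (tendsto_log_atTop.comp hx)
  have hlim : Tendsto (fun a => (1 - log (x a * r a) / log (x a))⁻¹) l (𝓝 1) := by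
    simpa using ((tendsto_const_nhds (x := (1 : ℝ))).sub hratio).inv₀ (by norm_num)
  refine hlim.congr' ?_
  filter_upwards [hxr.eventually (eventually_gt_nhds hc), hx.eventually_gt_atTop 1]
    with a hxr_pos hx_gt
  have hlogx : log (x a) ≠ 0 := (log_pos hx_gt).ne'
  have hr : r a ≠ 0 := by rintro h; simp [h] at hxr_pos
  rw [log_mul (by positivity) hr]
  field_simp
  ring

theorem tendsto_natCast_mul_sin_pi_div :
    Tendsto (fun n : ℕ => n * sin (π / n)) atTop (𝓝 π) := by
  have hangle : Tendsto (fun n : ℕ => π / n) atTop (𝓝 0) :=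
    tendsto_const_nhds.div_atTop tendsto_natCast_atTop_atTop
  have hsinc : Tendsto (fun n : ℕ => π * sinc (π / n)) atTop (𝓝 π) := by
    simpa [sinc_zero] using (continuous_sinc.tendsto 0 |>.comp hangle).const_mul π
  refine hsinc.congr' ?_
  filter_upwards [eventually_gt_atTop 0] with n hn
  have hn' : (n : ℝ) ≠ 0 := by positivity
  rw [sinc_of_ne_zero (by positivity)]
  field_simp

theorem tendsto_div_natCast_of_le_of_le_add_s8 {a : ℕ → ℝ} {c b : ℝ}
    (h : ∀ n : ℕ, c * n ≤ a n ∧ a n ≤ c * n + b) :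
    Tendsto (fun n : ℕ => a n / n) atTop (𝓝 c) := by
  have hupper : Tendsto (fun n : ℕ => c + b / n) atTop (𝓝 c) := by
    simpa using tendsto_const_nhds.add
      ((tendsto_const_nhds (x := b)).div_atTop tendsto_natCast_atTop_atTop)
  refine tendsto_of_tendsto_of_tendsto_of_le_of_le' tendsto_const_nhds hupper ?_ ?_ <;>
    filter_upwards [eventually_gt_atTop 0] with n hn <;>
    have hn' : (0 : ℝ) < n := by exact_mod_cast hn
  · rw [le_div_iff₀ hn']
    exact (h n).1
  · rw [div_le_iff₀ hn', add_mul, div_mul_cancel₀ _ hn'.ne']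
    exact (h n).2

theorem tendsto_two_mul_cos_mul_sin {α : Type*} {l : Filter α} {θ φ : α → ℝ}
    (hθ : Tendsto θ l (𝓝 (π / 4))) (hφ : Tendsto φ l (𝓝 (π / 4))) :
    Tendsto (fun a => 2 * cos (θ a) * sin (φ a)) l (𝓝 1) := by
  have hlim := ((continuous_cos.tendsto _).comp hθ).const_mul 2 |>.mul
    ((continuous_sin.tendsto _).comp hφ)
  have hvalue : 2 * cos (π / 4) * sin (π / 4) = 1 := by
    rw [cos_pi_div_four, sin_pi_div_four]
    nlinarith [mul_self_sqrt (zero_le_two : (0 : ℝ) ≤ 2)]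
  rw [← hvalue]
  exact hlim

theorem tendsto_natCast_mul_P {m : ℕ → ℕ}
    (hm : Tendsto (fun n : ℕ => (m n : ℝ) / n) atTop (𝓝 (1 / 4))) :
    Tendsto (fun n : ℕ => n * P n (m n)) atTop (𝓝 π) := by
  have hπn : Tendsto (fun n : ℕ => π / n) atTop (𝓝 0) :=
    tendsto_const_nhds.div_atTop tendsto_natCast_atTop_atTop
  have hφ : Tendsto (fun n : ℕ => (m n : ℝ) * π / n) atTop (𝓝 (π / 4)) := by
    convert hm.mul_const π using 2
    · ring
    · ring
  have hθ : Tendsto (fun n : ℕ => ((m n : ℝ) - 1) * π / n) atTop (𝓝 (π / 4)) := by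
    convert hφ.sub hπn using 2
    · ring
    · ring
  have hlim := tendsto_natCast_mul_sin_pi_div.div (tendsto_two_mul_cos_mul_sin hθ hφ) one_ne_zero
  rw [div_one] at hlim
  exact hlim.congr fun n => by simp only [Pi.div_apply, P]; ring

theorem dim_tendsto_one (m : ℕ → ℕ)
    (hm : ∀ n : ℕ, (n : ℝ) / 4 ≤ (m n : ℝ) ∧ (m n : ℝ) ≤ (n : ℝ) / 4 + 1) :
    Filter.Tendsto (fun n : ℕ => -Real.log n / Real.log (P n (m n)))
      Filter.atTop (nhds 1) := by
  have hratio : Tendsto (fun n : ℕ => (m n : ℝ) / n) atTop (𝓝 (1 / 4)) :=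
    tendsto_div_natCast_of_le_of_le_add_s8 (b := 1) fun n => by
      rw [one_div_mul_eq_div]; exact hm n
  exact tendsto_neg_log_div_log_of_tendsto_mul tendsto_natCast_atTop_atTop pi_pos
    (tendsto_natCast_mul_P hratio)
end

section
/- Let P = P(6,2) = 1/3 and let s be the unique positive real satisfying 6·(1/3)^s + (√(2P(P-1)(1+cos(π/3))+1))^s = 1. Then s = 2. Equivalently: since √(2·(1/3)·(1/3−1)·(1+1/2)+1) = √(1/3), the equation 6·(1/3)^s + (1/√3)^s = 1 has unique solution s = 2. -/
open Real

theorem hexflake_dim (s : ℝ) (hs : 0 < s) :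
    6 * (1 / 3 : ℝ) ^ s +
      (Real.sqrt (2 * (1 / 3) * ((1 / 3 : ℝ) - 1) * (1 + Real.cos (π / 3)) + 1)) ^ s = 1 ↔
    s = 2 := by
  have hcos : Real.cos (π / 3) = 1 / 2 := Real.cos_pi_div_three
  have harg : (2 * (1 / 3) * ((1 / 3 : ℝ) - 1) * (1 + Real.cos (π / 3)) + 1) = 1 / 3 := by
    rw [hcos]; norm_num
  rw [harg]
  set b : ℝ := Real.sqrt (1 / 3) with hb
  have hb0 : (0 : ℝ) < b := Real.sqrt_pos.mpr (by norm_num)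
  have hb1 : b < 1 := by
    rw [hb, show (1:ℝ) = Real.sqrt 1 from (Real.sqrt_one).symm]
    exact Real.sqrt_lt_sqrt (by norm_num) (by norm_num)
  have hbsq : b ^ (2 : ℝ) = 1 / 3 := by
    rw [hb, show ((2:ℝ)) = ((2:ℕ):ℝ) by norm_num, Real.rpow_natCast]
    exact Real.sq_sqrt (by norm_num)
  have key : (1 / 3 : ℝ) ^ s = (b ^ s) ^ 2 := by
    rw [← hbsq, ← Real.rpow_natCast (b ^ (s:ℝ)) 2, ← Real.rpow_mul hb0.le,
      ← Real.rpow_mul hb0.le]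
    norm_num; ring_nf
  constructor
  · intro h
    rw [key] at h
    have hy0 : 0 < b ^ s := Real.rpow_pos_of_pos hb0 s
    have hy : b ^ s = 1 / 3 := by nlinarith [sq_nonneg (b ^ s - 1/3)]
    have : b ^ s = b ^ (2 : ℝ) := by rw [hbsq, hy]
    have hlog := congrArg Real.log this
    rw [Real.log_rpow hb0, Real.log_rpow hb0] at hlog
    have hlb : Real.log b ≠ 0 := by
      have := Real.log_neg hb0 hb1
      linarith
    exact mul_right_cancel₀ hlb hlog
  · intro h
    subst h
    rw [key, hbsq]
    norm_num
end

section
/- Let P(n) be a sequence with P(n) = π/n + o(1/n) and for each n let s(n) > 0 satisfy n·P(n)^{s(n)} + (1 − 2P(n))^{s(n)} = 1, with s(n) bounded. Then s(n) → 2 as n → ∞. -/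
open Real Filter Topology

/-!
Write `Q = P ^ (s - 2)`, so that the Moran equation reads `(n P) · P · Q = 1 - (1 - 2P) ^ s`
with `n P → π`. By Bernoulli's inequality the right side is at most `max s 1 · 2P = O(P)`, so `Q`
is bounded above and `s - 2 ≥ log (const) / log P → 0`. Then eventually `s ≥ 1`, the right side
is at least `2P`, `Q` is bounded below, and `s - 2 ≤ log (const) / log P → 0`.
-/

lemma one_sub_rpow_one_sub_le {x s : ℝ} (hx0 : 0 ≤ x) (hx1 : x ≤ 1) :
    1 - (1 - x) ^ s ≤ max s 1 * x := by
  rcases le_total s 1 with hs | hs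
  · have := self_le_rpow_of_le_one (sub_nonneg.2 hx1) (by linarith) hs
    rw [max_eq_right hs]
    linarith
  · have := one_add_mul_self_le_rpow_one_add (neg_le_neg hx1) hs
    rw [← sub_eq_add_neg] at this
    rw [max_eq_left hs]
    linarith

lemma le_one_sub_rpow_one_sub {x s : ℝ} (hx0 : 0 ≤ x) (hx1 : x ≤ 1) (hs : 1 ≤ s) :
    x ≤ 1 - (1 - x) ^ s := by
  have := rpow_le_self_of_le_one (sub_nonneg.2 hx1) (by linarith) hs
  linarith

lemma tendsto_nhdsGT_zero_of_tendsto_natCast_mul {P : ℕ → ℝ} {a : ℝ} (ha : 0 < a)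
    (hP : Tendsto (fun n : ℕ => (n : ℝ) * P n) atTop (𝓝 a)) : Tendsto P atTop (𝓝[>] 0) := by
  have hP0 : Tendsto P atTop (𝓝 0) := by
    have h := hP.mul (tendsto_inv_atTop_zero.comp tendsto_natCast_atTop_atTop)
    rw [mul_zero] at h
    refine h.congr' ?_
    filter_upwards [eventually_ne_atTop 0] with n hn
    simp only [Function.comp_apply]
    field_simp
  refine tendsto_nhdsWithin_of_tendsto_nhds_of_eventually_within _ hP0 ?_
  filter_upwards [hP.eventually (eventually_gt_nhds ha)] with n hn
  exact pos_of_mul_pos_right hn n.cast_nonneg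

lemma tendsto_div_log_zero {ι : Type*} {l : Filter ι} {p : ι → ℝ} (hp : Tendsto p l (𝓝[>] 0))
    (a : ℝ) : Tendsto (fun i => a / log (p i)) l (𝓝 0) :=
  tendsto_const_nhds.div_atBot (tendsto_log_nhdsGT_zero.comp hp)

lemma div_log_le_of_rpow_le {p t K : ℝ} (hp0 : 0 < p) (hp1 : p < 1) (h : p ^ t ≤ K) :
    log K / log p ≤ t := by
  rw [div_le_iff_of_neg (log_neg hp0 hp1), ← log_rpow hp0]
  exact log_le_log (rpow_pos_of_pos hp0 t) h

lemma le_div_log_of_le_rpow {p t c : ℝ} (hp0 : 0 < p) (hp1 : p < 1) (hc : 0 < c)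
    (h : c ≤ p ^ t) : t ≤ log c / log p := by
  rw [le_div_iff_of_neg (log_neg hp0 hp1), ← log_rpow hp0]
  exact log_le_log hc h

lemma mul_rpow_eq_mul_mul_rpow_sub_two {p : ℝ} (hp : 0 < p) (n s : ℝ) :
    n * p ^ s = n * p * p ^ (s - 2) * p := by
  rw [rpow_sub hp, rpow_two]
  field_simp

lemma rpow_sub_two_le {n p s a b : ℝ} (hp : 0 < p) (ha : 0 < a) (hnp : a ≤ n * p)
    (h : n * p ^ s ≤ b * p) : p ^ (s - 2) ≤ b / a := by
  rw [mul_rpow_eq_mul_mul_rpow_sub_two hp, mul_le_mul_iff_left₀ hp] at h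
  rw [le_div_iff₀ ha]
  nlinarith [rpow_pos_of_pos hp (s - 2)]

lemma div_le_rpow_sub_two {n p s a b : ℝ} (hp : 0 < p) (ha : 0 < a) (hnp : n * p ≤ a)
    (h : b * p ≤ n * p ^ s) : b / a ≤ p ^ (s - 2) := by
  rw [mul_rpow_eq_mul_mul_rpow_sub_two hp, mul_le_mul_iff_left₀ hp] at h
  rw [div_le_iff₀ ha]
  nlinarith [rpow_pos_of_pos hp (s - 2)]

theorem infty_flake_dim_general (P s : ℕ → ℝ)
    (hP : Tendsto (fun n : ℕ => (n : ℝ) * P n) atTop (nhds π))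
    (hmoran : ∀ n : ℕ, (n : ℝ) * P n ^ s n + (1 - 2 * P n) ^ s n = 1)
    (hbdd : ∃ C : ℝ, ∀ n : ℕ, s n ≤ C) :
    Tendsto s atTop (nhds 2) := by
  obtain ⟨C, hC⟩ := hbdd
  have hP0 := tendsto_nhdsGT_zero_of_tendsto_natCast_mul pi_pos hP
  have hPsmall : ∀ᶠ n in atTop, 0 < P n ∧ 2 * P n < 1 := by
    filter_upwards [hP0 (Ioo_mem_nhdsGT (by norm_num : (0 : ℝ) < 1 / 2))] with n hn
    exact ⟨hn.1, by linarith [hn.2]⟩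
  have hnP_lb : ∀ᶠ n : ℕ in atTop, π / 2 ≤ n * P n :=
    hP.eventually (eventually_ge_nhds (half_lt_self pi_pos))
  have hnP_ub : ∀ᶠ n : ℕ in atTop, n * P n ≤ 2 * π :=
    hP.eventually (eventually_le_nhds (by linarith [pi_pos]))
  have hmoran' (n : ℕ) : (n : ℝ) * P n ^ s n = 1 - (1 - 2 * P n) ^ s n :=
    eq_sub_of_add_eq (hmoran n)
  have hlow : ∀ᶠ n in atTop, log (2 * max C 1 / (π / 2)) / log (P n) ≤ s n - 2 := by
    filter_upwards [hPsmall, hnP_lb] with n ⟨hp, hp1⟩ hm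
    refine div_log_le_of_rpow_le hp (by linarith) (rpow_sub_two_le hp
      (by positivity) hm ?_)
    calc (n : ℝ) * P n ^ s n ≤ max (s n) 1 * (2 * P n) :=
          (hmoran' n).trans_le (one_sub_rpow_one_sub_le (by linarith) hp1.le)
      _ ≤ 2 * max C 1 * P n := by nlinarith [max_le_max_right 1 (hC n)]
  have hs1 : ∀ᶠ n in atTop, 1 ≤ s n := by
    filter_upwards [hlow, (tendsto_div_log_zero hP0 _).eventually
      (eventually_gt_nhds neg_one_lt_zero)] with n h1 h2
    linarith only [h2.trans_le h1]
  have hup : ∀ᶠ n in atTop, s n - 2 ≤ log (2 / (2 * π)) / log (P n) := by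
    filter_upwards [hPsmall, hnP_ub, hs1] with n ⟨hp, hp1⟩ hm hs
    refine le_div_log_of_le_rpow hp (by linarith) (by positivity) (div_le_rpow_sub_two hp
      (by positivity) hm ?_)
    exact (le_one_sub_rpow_one_sub (by linarith) hp1.le hs).trans_eq (hmoran' n).symm
  have hs2 := tendsto_of_tendsto_of_tendsto_of_le_of_le' (tendsto_div_log_zero hP0 _)
    (tendsto_div_log_zero hP0 _) hlow hup
  simpa using hs2.add_const 2

theorem infty_flake_dim (P s : ℕ → ℝ)
    (hP : Tendsto (fun n : ℕ => (n : ℝ) * P n) atTop (nhds π))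
    (hs_pos : ∀ n : ℕ, 0 < s n)
    (hmoran : ∀ n : ℕ, (n : ℝ) * P n ^ s n + (1 - 2 * P n) ^ s n = 1)
    (hbdd : ∃ C : ℝ, ∀ n : ℕ, s n ≤ C) :
    Tendsto s atTop (nhds 2) :=
  infty_flake_dim_general P s hP hmoran hbdd
end

section
/- The Moran equation 9·P(9,3)^s = 1 with P(9,3) = sin(π/9)/(2·cos(2π/9)·sin(3π/9)) has unique positive solution s = −ln 9 / ln P(9,3), and 1.62 < s < 1.63. -/
open Real

lemma cos_bounds29 : 0.766 < Real.cos (2*π/9) ∧ Real.cos (2*π/9) < 0.7661 := by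
  set c := Real.cos (2*π/9) with hc
  have h3 : Real.cos (3*(2*π/9)) = 4*c^3 - 3*c := Real.cos_three_mul _
  have he : (3:ℝ)*(2*π/9) = π - π/3 := by ring
  rw [he, Real.cos_pi_sub, Real.cos_pi_div_three] at h3
  have hlo : Real.cos (π/4) < c := by
    apply Real.cos_lt_cos_of_nonneg_of_le_pi (by positivity) ?_ ?_
    · linarith [Real.pi_pos]
    · linarith [Real.pi_pos]
  rw [Real.cos_pi_div_four] at hlo
  have hs2 : Real.sqrt 2 ^ 2 = 2 := Real.sq_sqrt (by norm_num)
  have hs2p : 0 < Real.sqrt 2 := Real.sqrt_pos.mpr (by norm_num)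
  have h07 : (0.707:ℝ) < c := by nlinarith
  have k1 : (c - 0.766) * (4*(c^2 + 0.766*c + 0.766^2) - 3) = 0.000179616 := by
    linear_combination -h3
  have k2 : (c - 0.7661) * (4*(c^2 + 0.7661*c + 0.7661^2) - 3) = -0.000224583124 := by
    linear_combination -h3
  constructor
  · nlinarith [k1, h07]
  · nlinarith [k2, h07]

lemma sin_bounds19 : 0.342 < Real.sin (π/9) ∧ Real.sin (π/9) < 0.3421 := by
  set s := Real.sin (π/9) with hs
  have h3 : Real.sin (3*(π/9)) = 3*s - 4*s^3 := Real.sin_three_mul _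
  have he : (3:ℝ)*(π/9) = π/3 := by ring
  rw [he, Real.sin_pi_div_three] at h3
  have hs3 : Real.sqrt 3 ^ 2 = 3 := Real.sq_sqrt (by norm_num)
  have hs3p : 0 < Real.sqrt 3 := Real.sqrt_pos.mpr (by norm_num)
  have ht : 1.7320508 < Real.sqrt 3 ∧ Real.sqrt 3 < 1.7320509 := by
    constructor <;> nlinarith
  have hsp : 0 < s := Real.sin_pos_of_pos_of_lt_pi (by positivity) (by linarith [Real.pi_pos])
  have hhalf : s < 1/2 := by
    have : s < Real.sin (π/6) := by
      apply Real.sin_lt_sin_of_lt_of_le_pi_div_two ?_ ?_ ?_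
      · linarith [Real.pi_pos]
      · linarith [Real.pi_pos]
      · linarith [Real.pi_pos]
    rwa [Real.sin_pi_div_six] at this
  have k1 : (s - 0.342) * (3 - 4*(s^2 + 0.342*s + 0.342^2)) = Real.sqrt 3/2 - 0.865993248 := by
    linear_combination -h3
  have k2 : (s - 0.3421) * (3 - 4*(s^2 + 0.3421*s + 0.3421^2)) = Real.sqrt 3/2 - 0.866152850156 := by
    linear_combination -h3
  constructor
  · have hQ : 0 < 3 - 4*(s^2 + 0.342*s + 0.342^2) := by
      nlinarith [mul_pos hsp (sub_pos.mpr hhalf)]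
    nlinarith [k1, hQ, ht.1]
  · have hQ : 0 < 3 - 4*(s^2 + 0.3421*s + 0.3421^2) := by
      nlinarith [mul_pos hsp (sub_pos.mpr hhalf)]
    nlinarith [k2, hQ, ht.2]

lemma P93_eq : P 9 3 = Real.sin (π/9) / (Real.cos (2*π/9) * Real.sqrt 3) := by
  unfold P
  have e1 : (((3:ℕ):ℝ) - 1) * π / ((9:ℕ):ℝ) = 2*π/9 := by push_cast; ring
  have e2 : ((3:ℕ):ℝ) * π / ((9:ℕ):ℝ) = π/3 := by push_cast; ring
  have e3 : π / ((9:ℕ):ℝ) = π/9 := by push_cast; ring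
  rw [e1, e2, e3, Real.sin_pi_div_three]
  ring

lemma P93_bounds : 0.2577 < P 9 3 ∧ P 9 3 < 0.2579 := by
  rw [P93_eq]
  obtain ⟨hc1, hc2⟩ := cos_bounds29
  obtain ⟨hs1, hs2⟩ := sin_bounds19
  have hs3 : Real.sqrt 3 ^ 2 = 3 := Real.sq_sqrt (by norm_num)
  have hs3p : 0 < Real.sqrt 3 := Real.sqrt_pos.mpr (by norm_num)
  have ht : 1.7320508 < Real.sqrt 3 ∧ Real.sqrt 3 < 1.7320509 := by
    constructor <;> nlinarith
  have hD1 : Real.cos (2*π/9) * Real.sqrt 3 < 0.7661 * 1.7320509 :=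
    mul_lt_mul'' hc2 ht.2 (by linarith) (by positivity)
  have hD2 : (0.766:ℝ) * 1.7320508 < Real.cos (2*π/9) * Real.sqrt 3 :=
    mul_lt_mul'' hc1 ht.1 (by norm_num) (by norm_num)
  have hDpos : 0 < Real.cos (2*π/9) * Real.sqrt 3 := by nlinarith
  constructor
  · rw [lt_div_iff₀ hDpos]; nlinarith
  · rw [div_lt_iff₀ hDpos]; nlinarith

theorem dim_nine_three :
    9 * P 9 3 ^ (-Real.log 9 / Real.log (P 9 3)) = 1 ∧
    (∀ t : ℝ, 0 < t → 9 * P 9 3 ^ t = 1 → t = -Real.log 9 / Real.log (P 9 3)) ∧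
    1.62 < -Real.log 9 / Real.log (P 9 3) ∧ -Real.log 9 / Real.log (P 9 3) < 1.63 := by
  obtain ⟨hb1, hb2⟩ := P93_bounds
  have hP0 : 0 < P 9 3 := by linarith
  have hP1 : P 9 3 < 1 := by linarith
  have hlogP : Real.log (P 9 3) < 0 := Real.log_neg hP0 hP1
  have hlogne : Real.log (P 9 3) ≠ 0 := ne_of_lt hlogP
  refine ⟨?_, ?_, ?_, ?_⟩
  · rw [Real.rpow_def_of_pos hP0]
    have he : Real.log (P 9 3) * (-Real.log 9 / Real.log (P 9 3)) = -Real.log 9 := by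
      field_simp
    rw [he, Real.exp_neg, Real.exp_log (by norm_num : (0:ℝ) < 9)]
    norm_num
  · intro t ht hEq
    have h9 : P 9 3 ^ t = 9⁻¹ := by linarith
    have hl : Real.log (P 9 3 ^ t) = t * Real.log (P 9 3) := Real.log_rpow hP0 t
    rw [h9, Real.log_inv] at hl
    rw [eq_div_iff hlogne]
    linarith
  · have hkey : (0:ℝ) < 50 * Real.log 9 + 81 * Real.log (P 9 3) := by
      have hEq : 50 * Real.log 9 + 81 * Real.log (P 9 3)
          = Real.log (9^50 * P 9 3 ^ 81) := by
        rw [Real.log_mul (by positivity) (by positivity), Real.log_pow, Real.log_pow]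
        push_cast; ring
      rw [hEq]
      apply Real.log_pos
      calc (1:ℝ) < 9^50 * (0.2577:ℝ)^81 := by norm_num
        _ < 9^50 * P 9 3 ^ 81 := by
            apply mul_lt_mul_of_pos_left (pow_lt_pow_left₀ hb1 (by norm_num) (by norm_num))
            positivity
    rw [lt_div_iff_of_neg hlogP]
    linarith
  · have hkey : 100 * Real.log 9 + 163 * Real.log (P 9 3) < 0 := by
      have hEq : 100 * Real.log 9 + 163 * Real.log (P 9 3)
          = Real.log (9^100 * P 9 3 ^ 163) := by
        rw [Real.log_mul (by positivity) (by positivity), Real.log_pow, Real.log_pow]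
        push_cast; ring
      rw [hEq]
      apply Real.log_neg (by positivity)
      calc 9^100 * P 9 3 ^ 163 < 9^100 * (0.2579:ℝ)^163 := by
            apply mul_lt_mul_of_pos_left (pow_lt_pow_left₀ hb2 (le_of_lt hP0) (by norm_num))
            positivity
        _ < 1 := by norm_num
    rw [div_lt_iff_of_neg hlogP]
    linarith
end

section
/- For every n ≥ 2 and integer m with n/4 ≤ m ≤ n/4+1, P(n,m) ≤ 1/2, with equality iff n ∈ {2,3,4}; consequently −ln(n)/ln(P(n,m)) ≤ ln(n)/ln 2. -/
open Real

theorem P_le_half (n m : ℕ) (hn : 2 ≤ n) (hm : 1 ≤ m)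
    (hm1 : (n : ℝ) / 4 ≤ (m : ℝ)) (hm2 : (m : ℝ) ≤ (n : ℝ) / 4 + 1) :
    P n m ≤ 1 / 2 ∧ (P n m = 1 / 2 ↔ n = 2 ∨ n = 3 ∨ n = 4) ∧
    -Real.log n / Real.log (P n m) ≤ Real.log n / Real.log 2 := by
  have hN : (2:ℝ) ≤ (n:ℝ) := by exact_mod_cast hn
  have hN0 : (0:ℝ) < (n:ℝ) := by linarith
  have hM : (1:ℝ) ≤ (m:ℝ) := by exact_mod_cast hm
  have hpi := Real.pi_pos
  have hθpos : 0 < π / n := by positivity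
  have hθle : π / (n:ℝ) ≤ π / 2 := by
    apply div_le_div_of_nonneg_left hpi.le (by norm_num) hN
  set s : ℝ := Real.sin (π / n) with hs_def
  set t : ℝ := Real.sin ((2*(m:ℝ) - 1) * π / n) with ht_def
  have hs_pos : 0 < s := Real.sin_pos_of_pos_of_lt_pi hθpos (by linarith)
  -- bound on the distance of the key angle from π/2
  have hrw : π/2 - (2*(m:ℝ)-1)*π/(n:ℝ) = ((n:ℝ)/2 - (2*(m:ℝ) - 1)) * (π/(n:ℝ)) := by
    field_simp
  have habs : |π/2 - (2*(m:ℝ)-1)*π/(n:ℝ)| ≤ π/(n:ℝ) := by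
    rw [hrw, abs_mul, abs_of_pos hθpos]
    have h1 : |(n:ℝ)/2 - (2*(m:ℝ) - 1)| ≤ 1 := by
      rw [abs_le]; constructor <;> linarith
    nlinarith
  have ht_ge : Real.cos (π/(n:ℝ)) ≤ t := by
    have h1 : t = Real.cos (π/2 - (2*(m:ℝ)-1)*π/(n:ℝ)) := by
      rw [Real.cos_pi_div_two_sub]
    rw [h1, ← Real.cos_abs (π/2 - (2*(m:ℝ)-1)*π/(n:ℝ))]
    exact Real.cos_le_cos_of_nonneg_of_le_pi (abs_nonneg _) (by linarith) habs
  have ht_nonneg : 0 ≤ t := by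
    refine le_trans ?_ ht_ge
    exact Real.cos_nonneg_of_mem_Icc ⟨by linarith, hθle⟩
  -- the denominator identity
  have hden : 2 * Real.cos (((m:ℝ) - 1) * π / n) * Real.sin ((m:ℝ) * π / n) = t + s := by
    rw [ht_def, hs_def,
      show (2*(m:ℝ) - 1) * π / n = (((m:ℝ)-1) * π / n + (m:ℝ) * π / n) by ring,
      show π / (n:ℝ) = ((m:ℝ) * π / n - ((m:ℝ)-1) * π / n) by ring,
      Real.sin_add, Real.sin_sub]
    ring
  have hP : P n m = s / (s + t) := by
    unfold P
    rw [hden, hs_def]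
    ring_nf
  -- strictness for n ≥ 5
  have h5 : 5 ≤ n → s < t := by
    intro h5n
    have hN5 : (5:ℝ) ≤ (n:ℝ) := by exact_mod_cast h5n
    have hθ4 : π / (n:ℝ) < π / 4 := by
      apply div_lt_div_of_pos_left hpi (by norm_num)
      linarith
    have : s < Real.cos (π/(n:ℝ)) := by
      rw [← Real.sin_pi_div_two_sub]
      apply Real.strictMonoOn_sin ⟨by linarith, by linarith⟩ ⟨by linarith, by linarith⟩
      linarith
    linarith
  -- equality for n ∈ {2,3,4}
  have h234 : n = 2 ∨ n = 3 ∨ n = 4 → t = s := by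
    rintro (rfl|rfl|rfl)
    · have hm1' : m = 1 := by
        have h15 : (m:ℝ) ≤ 1.5 := by norm_num at hm2; linarith
        have : m ≤ 1 := by
          by_contra h
          push_neg at h
          have : (2:ℝ) ≤ (m:ℝ) := by exact_mod_cast h
          linarith
        omega
      subst hm1'
      rw [ht_def, hs_def]
      norm_num
    · have hm1' : m = 1 := by
        have : (m:ℝ) ≤ 1.75 := by norm_num at hm2; linarith
        have : m ≤ 1 := by
          by_contra h
          push_neg at h
          have : (2:ℝ) ≤ (m:ℝ) := by exact_mod_cast h
          linarith
        omega
      subst hm1'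
      rw [ht_def, hs_def]
      norm_num
    · have hm12 : m = 1 ∨ m = 2 := by
        have h2 : m ≤ 2 := by
          by_contra h
          push_neg at h
          have : (3:ℝ) ≤ (m:ℝ) := by exact_mod_cast h
          norm_num at hm2
          linarith
        omega
      rcases hm12 with rfl | rfl
      · rw [ht_def, hs_def]; norm_num
      · rw [ht_def, hs_def, show (2*((2:ℕ):ℝ)-1)*π/((4:ℕ):ℝ) = π - π/((4:ℕ):ℝ) by
          push_cast; ring, Real.sin_pi_sub]
  have hst : s ≤ t := by
    rcases le_or_gt 5 n with h | h
    · exact (h5 h).le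
    · have : n = 2 ∨ n = 3 ∨ n = 4 := by omega
      exact (h234 this).ge.trans_eq rfl
  have hsum : 0 < s + t := by linarith
  have hPle : P n m ≤ 1 / 2 := by
    rw [hP, div_le_div_iff₀ hsum (by norm_num)]
    linarith
  have hPpos : 0 < P n m := by
    rw [hP]; positivity
  refine ⟨hPle, ?_, ?_⟩
  · constructor
    · intro hEq
      have hts : s = t := by
        rw [hP, div_eq_div_iff hsum.ne' (by norm_num : (2:ℝ) ≠ 0)] at hEq
        linarith
      by_contra hcon
      have hn5 : 5 ≤ n := by omega
      exact absurd hts (h5 hn5).ne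
    · intro h
      rw [hP, h234 h, div_eq_iff (by positivity : (0:ℝ) < s + s).ne']
      ring
  · have hlogP : Real.log (P n m) ≤ -Real.log 2 := by
      have := Real.log_le_log hPpos hPle
      rwa [show (1:ℝ)/2 = 2⁻¹ by norm_num, Real.log_inv] at this
    have hlog2 : 0 < Real.log 2 := Real.log_pos one_lt_two
    have hlogn : 0 ≤ Real.log n := Real.log_nonneg (by linarith)
    rw [show -Real.log n / Real.log (P n m) = Real.log n / (-Real.log (P n m)) by
      rw [div_neg, neg_div]]
    exact div_le_div_of_nonneg_left hlogn hlog2 (by linarith)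
end
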